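/- Let D ∈ ℝ^{p×p} have singular values σ₁,…,σ_p ∈ [0,1], define R² = (∑_j σ_j²)/p, and let α, α' be independent uniform on the unit ball of ℝ^p. Then E[α(I − DDᵀ)αᵀ + α'(I − DᵀD)α'ᵀ + 2α(D − DDᵀD)α'ᵀ] = (2p/(p+2))(1 − R²). -/

import Mathlib

/-!
Reflecting one coordinate, or swapping two, preserves both Lebesgue measure and the Euclidean
unit ball, so a uniform point `x` of the ball has `E[x] = 0` and `E[x xᵀ] = c • 1`; the radial
formula `E ‖x‖² = p / (p + 2)` gives `c = 1 / (p + 2)`. Hence `E[xᵀ M x] = tr M / (p + 2)`, the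
cross term vanishes by independence, and both `tr (DDᵀ)` and `tr (DᵀD)` equal `∑ σ_j²` because
`U` and `V` have orthonormal columns.
-/

open Matrix MeasureTheory ProbabilityTheory

section Cond

variable {α β : Type*} [MeasurableSpace α] [MeasurableSpace β]

theorem MeasureTheory.MeasurePreserving.cond {μ : Measure α} {ν : Measure β} {e : α → β}
    (he : MeasurePreserving e μ ν) (hme : MeasurableEmbedding e) (s : Set β) :
    MeasurePreserving e (μ[|e ⁻¹' s]) (ν[|s]) := by
  rw [ProbabilityTheory.cond, ProbabilityTheory.cond, he.measure_preimage_emb hme]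
  exact (he.restrict_preimage_emb hme s).smul_measure _

theorem integral_cond_comp_of_preimage_eq {E : Type*} [NormedAddCommGroup E] [NormedSpace ℝ E]
    {μ : Measure α} {e : α ≃ᵐ α} (he : MeasurePreserving e μ μ) {s : Set α} (hs : e ⁻¹' s = s)
    (f : α → E) : ∫ x, f (e x) ∂μ[|s] = ∫ x, f x ∂μ[|s] := by
  have := he.cond e.measurableEmbedding s
  rw [hs] at this
  exact this.integral_comp' f

theorem IsCompact.integrable_cond [TopologicalSpace α] [T2Space α] [OpensMeasurableSpace α]
    {E : Type*} [NormedAddCommGroup E] {μ : Measure α} [IsFiniteMeasureOnCompacts μ]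
    {s : Set α} (hs : IsCompact s) (h0 : μ s ≠ 0) {f : α → E} (hf : ContinuousOn f s) :
    Integrable f (μ[|s]) :=
  (hf.integrableOn_compact hs).smul_measure (ENNReal.inv_ne_top.2 h0)

end Cond

theorem integral_norm_pow_cond_closedBall {E : Type*} [NormedAddCommGroup E] [NormedSpace ℝ E]
    [MeasurableSpace E] [BorelSpace E] [FiniteDimensional ℝ E] [Nontrivial E]
    (μ : Measure E) [μ.IsAddHaarMeasure] (k : ℕ) :
    ∫ x, ‖x‖ ^ k ∂μ[|Metric.closedBall 0 1]
      = Module.finrank ℝ E / (Module.finrank ℝ E + k) := by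
  set n := Module.finrank ℝ E
  have hn : 0 < n := Module.finrank_pos
  have hradial : ∫ t in Set.Ioi (0 : ℝ), t ^ (n - 1) • (Set.Iic 1).indicator (· ^ k) t
      = 1 / (n + k) := by
    have hind : ∀ t : ℝ, t ^ (n - 1) • (Set.Iic 1).indicator (· ^ k) t
        = (Set.Iic 1).indicator (· ^ (n - 1 + k)) t := by
      intro t
      by_cases ht : t ∈ Set.Iic 1 <;> simp [ht, pow_add]
    simp_rw [hind]
    rw [setIntegral_indicator measurableSet_Iic, Set.Ioi_inter_Iic,
      ← intervalIntegral.integral_of_le zero_le_one, integral_pow]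
    have hcast : ((n - 1 + k : ℕ) : ℝ) + 1 = n + k := by
      rw [Nat.cast_add, Nat.cast_sub hn]
      push_cast
      ring
    rw [hcast]
    simp
  have hball : ∫ x in Metric.closedBall 0 1, ‖x‖ ^ k ∂μ
      = n * μ.real (Metric.closedBall 0 1) / (n + k) := by
    have hind : (Metric.closedBall (0 : E) 1).indicator (‖·‖ ^ k)
        = fun x => (Set.Iic 1).indicator (· ^ k) ‖x‖ := by
      ext x
      by_cases hx : ‖x‖ ≤ 1 <;> simp [hx]
    rw [← integral_indicator Metric.isClosed_closedBall.measurableSet, hind,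
      integral_fun_norm_addHaar, hradial, Measure.addHaar_real_closedBall_eq_addHaar_real_ball]
    simp only [nsmul_eq_mul, smul_eq_mul]
    ring
  have hvol : μ.real (Metric.closedBall 0 1) ≠ 0 :=
    ENNReal.toReal_ne_zero.2 ⟨(Metric.measure_closedBall_pos μ 0 one_pos).ne',
      measure_closedBall_lt_top.ne⟩
  rw [ProbabilityTheory.cond, integral_smul_measure, hball, ENNReal.toReal_inv, smul_eq_mul,
    ← measureReal_def]
  field_simp

/-- Not `Metric.closedBall 0 1`, which on `ι → ℝ` is the ball of the sup norm. -/
def euclideanUnitBall (ι : Type*) [Fintype ι] : Set (ι → ℝ) := {x | ∑ k, x k ^ 2 ≤ 1}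

namespace euclideanUnitBall

variable {ι : Type*} [Fintype ι]

theorem preimage_ofLp :
    WithLp.ofLp ⁻¹' euclideanUnitBall ι = Metric.closedBall (0 : EuclideanSpace ℝ ι) 1 := by
  ext x
  rw [Set.mem_preimage, mem_closedBall_zero_iff, ← sq_le_one_iff₀ (norm_nonneg x),
    EuclideanSpace.real_norm_sq_eq]
  rfl

theorem measurePreserving_ofLp :
    MeasurePreserving WithLp.ofLp (volume[|Metric.closedBall (0 : EuclideanSpace ℝ ι) 1])
      (volume[|euclideanUnitBall ι]) := by
  rw [← preimage_ofLp]
  exact (EuclideanSpace.volume_preserving_symm_measurableEquiv_toLp ι).cond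
    (MeasurableEquiv.toLp 2 (ι → ℝ)).symm.measurableEmbedding _

theorem isCompact : IsCompact (euclideanUnitBall ι) := by
  rw [← Set.image_preimage_eq (euclideanUnitBall ι) (WithLp.ofLp_surjective 2), preimage_ofLp]
  exact (isCompact_closedBall _ _).image (PiLp.continuous_ofLp 2 _)

theorem volume_ne_zero : volume (euclideanUnitBall ι) ≠ 0 := by
  rw [← (EuclideanSpace.volume_preserving_symm_measurableEquiv_toLp ι).measure_preimage_equiv,
    MeasurableEquiv.coe_toLp_symm, preimage_ofLp]
  exact (Metric.measure_closedBall_pos (volume : Measure (EuclideanSpace ℝ ι)) _ one_pos).ne'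

instance : IsProbabilityMeasure (volume[|euclideanUnitBall ι]) :=
  cond_isProbabilityMeasure_of_finite volume_ne_zero isCompact.measure_lt_top.ne

theorem integrable_of_continuous {E : Type*} [NormedAddCommGroup E] {f : (ι → ℝ) → E}
    (hf : Continuous f) : Integrable f (volume[|euclideanUnitBall ι]) :=
  isCompact.integrable_cond volume_ne_zero hf.continuousOn

theorem integral_dotProduct_mulVec_eq_zero (a : ι → ℝ) (M : Matrix ι ι ℝ) :
    ∫ x, a ⬝ᵥ (M *ᵥ x) ∂volume[|euclideanUnitBall ι] = 0 := by
  have hneg := integral_cond_comp_of_preimage_eq (e := MeasurableEquiv.neg (ι → ℝ))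
    (Measure.measurePreserving_neg volume) (s := euclideanUnitBall ι)
    (by ext x; simp [euclideanUnitBall]) (fun x => a ⬝ᵥ (M *ᵥ x))
  simp only [MeasurableEquiv.neg_apply, mulVec_neg, dotProduct_neg, integral_neg] at hneg
  linarith

theorem integral_mul_apply_of_ne {i j : ι} (hij : i ≠ j) :
    ∫ x, x i * x j ∂volume[|euclideanUnitBall ι] = 0 := by
  classical
  let e : (ι → ℝ) ≃ᵐ (ι → ℝ) :=
    .piCongrRight fun k => if k = i then .neg ℝ else .refl ℝ
  have he : ∀ x k, e x k = if k = i then -x k else x k := fun x k => by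
    show (if k = i then MeasurableEquiv.neg ℝ else .refl ℝ) (x k) = _
    split_ifs <;> rfl
  have hpres : MeasurePreserving e volume volume := by
    refine volume_preserving_pi fun k => ?_
    dsimp only
    split_ifs
    exacts [Measure.measurePreserving_neg volume, MeasurePreserving.id volume]
  have hball : e ⁻¹' euclideanUnitBall ι = euclideanUnitBall ι := by
    ext x
    simp [euclideanUnitBall, he, apply_ite (· ^ 2)]
  have hflip := integral_cond_comp_of_preimage_eq hpres hball (fun x => x i * x j)
  simp only [he, if_pos, if_neg hij.symm, neg_mul, integral_neg] at hflip
  linarith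

theorem integral_sq_apply_eq (i j : ι) :
    ∫ x, x i ^ 2 ∂volume[|euclideanUnitBall ι] = ∫ x, x j ^ 2 ∂volume[|euclideanUnitBall ι] := by
  classical
  let e : (ι → ℝ) ≃ᵐ (ι → ℝ) := .arrowCongr' (Equiv.swap i j) (.refl ℝ)
  have he : ∀ x k, e x k = x (Equiv.swap i j k) := fun x k => by
    simp [e, MeasurableEquiv.arrowCongr', Equiv.arrowCongr']
  have hball : e ⁻¹' euclideanUnitBall ι = euclideanUnitBall ι := by
    ext x
    simp only [euclideanUnitBall, Set.mem_preimage, Set.mem_ofPred_eq, he]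
    rw [Equiv.sum_comp (Equiv.swap i j) (fun k => x k ^ 2)]
  have hswap := integral_cond_comp_of_preimage_eq (e := e)
    (volume_preserving_arrowCongr' _ _ (MeasurePreserving.id volume)) hball (fun x => x j ^ 2)
  simpa only [he, Equiv.swap_apply_right] using hswap

theorem integral_sq_apply (i : ι) :
    ∫ x, x i ^ 2 ∂volume[|euclideanUnitBall ι] = 1 / (Fintype.card ι + 2) := by
  have : Nonempty ι := ⟨i⟩
  have hsum : ∫ x, ∑ k, x k ^ 2 ∂volume[|euclideanUnitBall ι]
      = Fintype.card ι / (Fintype.card ι + 2) := by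
    rw [← measurePreserving_ofLp.integral_comp
      (MeasurableEquiv.toLp 2 (ι → ℝ)).symm.measurableEmbedding]
    simp_rw [← EuclideanSpace.real_norm_sq_eq]
    rw [integral_norm_pow_cond_closedBall, finrank_euclideanSpace]
    push_cast
    rfl
  rw [integral_finsetSum _ fun k _ => integrable_of_continuous (by fun_prop)] at hsum
  simp_rw [integral_sq_apply_eq _ i, Finset.sum_const, Finset.card_univ, nsmul_eq_mul] at hsum
  field_simp at hsum ⊢
  exact hsum

theorem integral_mul_apply [DecidableEq ι] (i j : ι) :
    ∫ x, x i * x j ∂volume[|euclideanUnitBall ι]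
      = (1 : Matrix ι ι ℝ) i j / (Fintype.card ι + 2) := by
  rcases eq_or_ne i j with rfl | hij
  · simp_rw [one_apply_eq, ← sq, integral_sq_apply]
  · rw [integral_mul_apply_of_ne hij, one_apply_ne hij, zero_div]

theorem integral_dotProduct_mulVec_self (M : Matrix ι ι ℝ) :
    ∫ x, x ⬝ᵥ (M *ᵥ x) ∂volume[|euclideanUnitBall ι] = M.trace / (Fintype.card ι + 2) := by
  classical
  have hexpand : ∀ x : ι → ℝ, x ⬝ᵥ (M *ᵥ x) = ∑ i, ∑ j, M i j * (x i * x j) := fun x => by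
    simp only [dotProduct, mulVec, Finset.mul_sum]
    exact Finset.sum_congr rfl fun i _ => Finset.sum_congr rfl fun j _ => by ring
  have hrow : ∀ i, ∫ x, ∑ j, M i j * (x i * x j) ∂volume[|euclideanUnitBall ι]
      = M i i / (Fintype.card ι + 2) := fun i => by
    rw [integral_finsetSum _ fun j _ => integrable_of_continuous (by fun_prop)]
    simp [integral_const_mul, integral_mul_apply, one_apply, div_eq_mul_inv]
  simp_rw [hexpand]
  rw [integral_finsetSum _ fun i _ => integrable_of_continuous (by fun_prop)]
  simp [hrow, trace, Finset.sum_div]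

theorem integral_integral_dotProduct_mulVec (A B C : Matrix ι ι ℝ) :
    ∫ α, ∫ α', α ⬝ᵥ (A *ᵥ α) + α' ⬝ᵥ (B *ᵥ α') + 2 * (α ⬝ᵥ (C *ᵥ α'))
        ∂volume[|euclideanUnitBall ι] ∂volume[|euclideanUnitBall ι]
      = (A.trace + B.trace) / (Fintype.card ι + 2) := by
  have hinner : ∀ α : ι → ℝ,
      ∫ α', α ⬝ᵥ (A *ᵥ α) + α' ⬝ᵥ (B *ᵥ α') + 2 * (α ⬝ᵥ (C *ᵥ α')) ∂volume[|euclideanUnitBall ι]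
        = α ⬝ᵥ (A *ᵥ α) + B.trace / (Fintype.card ι + 2) := fun α => by
    rw [integral_add (integrable_of_continuous (by fun_prop))
        (integrable_of_continuous (by fun_prop)),
      integral_add (integrable_const _) (integrable_of_continuous (by fun_prop)), integral_const,
      integral_const_mul, integral_dotProduct_mulVec_self, integral_dotProduct_mulVec_eq_zero]
    simp
  simp_rw [hinner]
  rw [integral_add (integrable_of_continuous (by fun_prop)) (integrable_const _),
    integral_dotProduct_mulVec_self, integral_const]
  simp
  ring

end euclideanUnitBall

theorem Matrix.trace_transpose_mul_self_of_eq_mul_diagonal_mul_transpose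
    {m n l R : Type*} [Fintype m] [Fintype n] [Fintype l] [DecidableEq n] [CommSemiring R]
    {D : Matrix m l R} {U : Matrix m n R} {V : Matrix l n R} {σ : n → R}
    (hU : Uᵀ * U = 1) (hV : Vᵀ * V = 1) (hD : D = U * diagonal σ * Vᵀ) :
    (Dᵀ * D).trace = ∑ j, σ j ^ 2 := by
  have hDtD : Dᵀ * D = V * (diagonal (fun j => σ j ^ 2) * Vᵀ) := by
    rw [hD, transpose_mul, transpose_mul, diagonal_transpose, transpose_transpose]
    simp only [Matrix.mul_assoc]
    rw [← Matrix.mul_assoc Uᵀ, hU, Matrix.one_mul, ← Matrix.mul_assoc (diagonal σ),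
      diagonal_mul_diagonal]
    simp_rw [← sq]
  rw [hDtD, trace_mul_comm, Matrix.mul_assoc, hV, Matrix.mul_one, trace_diagonal]

theorem expected_td_quadform_eq_cca_general (p : ℕ)
    (D : Matrix (Fin p) (Fin p) ℝ)
    (U V : Matrix (Fin p) (Fin p) ℝ)
    (σ : Fin p → ℝ) (hU : Uᵀ * U = 1) (hV : Vᵀ * V = 1)
    (hD : D = U * Matrix.diagonal σ * Vᵀ)
    (R2 : ℝ) (hR2 : R2 = (∑ j : Fin p, (σ j) ^ 2) / p) :
    (∫ α : Fin p → ℝ,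
      ∫ α' : Fin p → ℝ,
        (α ⬝ᵥ (((1 : Matrix (Fin p) (Fin p) ℝ) - D * Dᵀ) *ᵥ α)
          + α' ⬝ᵥ (((1 : Matrix (Fin p) (Fin p) ℝ) - Dᵀ * D) *ᵥ α')
          + 2 * (α ⬝ᵥ ((D - D * Dᵀ * D) *ᵥ α')))
      ∂((volume {x : Fin p → ℝ | ∑ k : Fin p, (x k) ^ 2 ≤ 1})⁻¹ •
          volume.restrict {x : Fin p → ℝ | ∑ k : Fin p, (x k) ^ 2 ≤ 1})
      ∂((volume {x : Fin p → ℝ | ∑ j : Fin p, (x j) ^ 2 ≤ 1})⁻¹ •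
          volume.restrict {x : Fin p → ℝ | ∑ j : Fin p, (x j) ^ 2 ≤ 1}))
    = (2 * (p : ℝ) / ((p : ℝ) + 2)) * (1 - R2) := by
  have htrace := trace_transpose_mul_self_of_eq_mul_diagonal_mul_transpose hU hV hD
  change ∫ α, ∫ α', _ ∂volume[|euclideanUnitBall (Fin p)] ∂volume[|euclideanUnitBall (Fin p)] = _
  rw [euclideanUnitBall.integral_integral_dotProduct_mulVec, trace_sub, trace_sub, trace_one,
    trace_mul_comm D, htrace, Fintype.card_fin, hR2]
  rcases eq_or_ne p 0 with rfl | hp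
  · simp
  · field_simp
    ring

/-- Theorem 4, case `p = p'`: the expected TD quadratic form over
uniformly random tasks equals `(2p/(p+2))(1 − R²)` with `R² = (∑σ_j²)/p`. -/
theorem expected_td_quadform_eq_cca (p : ℕ)
    (D : Matrix (Fin p) (Fin p) ℝ)
    (U V : Matrix (Fin p) (Fin p) ℝ)
    (σ : Fin p → ℝ) (hU : Uᵀ * U = 1) (hV : Vᵀ * V = 1)
    (hσ : ∀ j, σ j ∈ Set.Icc (0 : ℝ) 1)
    (hD : D = U * Matrix.diagonal σ * Vᵀ)
    (R2 : ℝ) (hR2 : R2 = (∑ j : Fin p, (σ j) ^ 2) / p) :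
    (∫ α : Fin p → ℝ,
      ∫ α' : Fin p → ℝ,
        (α ⬝ᵥ (((1 : Matrix (Fin p) (Fin p) ℝ) - D * Dᵀ) *ᵥ α)
          + α' ⬝ᵥ (((1 : Matrix (Fin p) (Fin p) ℝ) - Dᵀ * D) *ᵥ α')
          + 2 * (α ⬝ᵥ ((D - D * Dᵀ * D) *ᵥ α')))
      ∂((volume {x : Fin p → ℝ | ∑ k : Fin p, (x k) ^ 2 ≤ 1})⁻¹ •
          volume.restrict {x : Fin p → ℝ | ∑ k : Fin p, (x k) ^ 2 ≤ 1})
      ∂((volume {x : Fin p → ℝ | ∑ j : Fin p, (x j) ^ 2 ≤ 1})⁻¹ •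
          volume.restrict {x : Fin p → ℝ | ∑ j : Fin p, (x j) ^ 2 ≤ 1}))
    = (2 * (p : ℝ) / ((p : ℝ) + 2)) * (1 - R2) :=
  expected_td_quadform_eq_cca_general p D U V σ hU hV hD R2 hR2
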